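/- arXiv:2605.03368 — 2 statements merged into one kernel-verified Lean document; each statement's English description precedes it below -/
import Mathlib

section
/- Let G be a finite groupoid, H and K subgroupoids, and g a morphism of G. The double coset H g K = {h g k : h ∈ H₁, k ∈ K₁, dom h = cod g, cod k = dom g} is in bijection with the set of objects of the connected component of g's corresponding object in the comma category Incl_K ↓ Incl_H. In particular, morphisms g, g' of G lie in the same double coset iff the corresponding objects of Incl_K ↓ Incl_H are connected. -/
/-! A morphism of the comma category `Incl_K ↓ Incl_H` from `g'` to `g` is a commuting
square `k ≫ g = g' ≫ h` with `k ∈ K`, `h ∈ H`; solving for `g'` exhibits it in `H g K`, and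
conversely. Every element of `H g K` starts in `K` and ends in `H`, so it is itself an object of
the comma category, and the bijection keeps the underlying morphism. -/

open CategoryTheory

variable {G : Type} [Groupoid G]

/-- The double coset `H g K` of a morphism `g : a ⟶ b`, as a set of morphisms of `G`
(encoded as triples `⟨dom, cod, morphism⟩`). -/
def doubleCoset (H K : Subgroupoid G) {a b : G} (g : a ⟶ b) : Set (Σ s t : G, s ⟶ t) :=
  {m | ∃ (s t : G) (h : b ⟶ s) (k : t ⟶ a),
    h ∈ H.arrows b s ∧ k ∈ K.arrows t a ∧ m = ⟨t, s, k ≫ g ≫ h⟩}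

lemma doubleCoset_mem_objs {H K : Subgroupoid G} {a b : G} {g : a ⟶ b}
    {m : Σ s t : G, s ⟶ t} (hm : m ∈ doubleCoset H K g) :
    m.1 ∈ K.objs ∧ m.2.1 ∈ H.objs := by
  obtain ⟨s, t, h, k, hh, hk, rfl⟩ := hm
  exact ⟨K.mem_objs_of_src hk, H.mem_objs_of_tgt hh⟩

lemma mem_doubleCoset_iff {H K : Subgroupoid G} {a b a' b' : G} {g : a ⟶ b} {g' : a' ⟶ b'} :
    (⟨a', b', g'⟩ : Σ s t : G, s ⟶ t) ∈ doubleCoset H K g ↔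
      ∃ k ∈ K.arrows a' a, ∃ h ∈ H.arrows b' b, k ≫ g = g' ≫ h := by
  constructor
  · rintro ⟨s, t, h, k, hh, hk, heq⟩
    obtain ⟨rfl, heq⟩ := Sigma.mk.inj_iff.mp heq
    obtain ⟨rfl, heq⟩ := Sigma.mk.inj_iff.mp (eq_of_heq heq)
    refine ⟨k, hk, Groupoid.inv h, H.inv hh, ?_⟩
    simp [eq_of_heq heq]
  · rintro ⟨k, hk, h, hh, w⟩
    have hg' : g' = k ≫ g ≫ Groupoid.inv h := by
      rw [← Category.assoc, w]
      simp
    exact ⟨b', a', Groupoid.inv h, k, H.inv hh, hk, by rw [hg']⟩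

lemma mem_doubleCoset_iff_nonempty_hom (H K : Subgroupoid G) {a b : G} (g : a ⟶ b)
    (ha : a ∈ K.objs) (hb : b ∈ H.objs) (p : Comma K.hom H.hom) :
    (⟨p.left.1, p.right.1, p.hom⟩ : Σ s t : G, s ⟶ t) ∈ doubleCoset H K g ↔
      Nonempty (p ⟶ { left := ⟨a, ha⟩, right := ⟨b, hb⟩, hom := g }) :=
  mem_doubleCoset_iff.trans
    ⟨fun ⟨k, hk, h, hh, w⟩ => ⟨⟨⟨k, hk⟩, ⟨h, hh⟩, w⟩⟩,
      fun ⟨⟨⟨k, hk⟩, ⟨h, hh⟩, w⟩⟩ => ⟨k, hk, h, hh, w⟩⟩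

def doubleCosetEquivComma (H K : Subgroupoid G) {a b : G} (g : a ⟶ b)
    (ha : a ∈ K.objs) (hb : b ∈ H.objs) :
    doubleCoset H K g ≃
      {p : Comma K.hom H.hom //
        Nonempty (p ⟶ { left := ⟨a, ha⟩, right := ⟨b, hb⟩, hom := g })} where
  toFun m :=
    ⟨⟨⟨m.1.1, (doubleCoset_mem_objs m.2).1⟩, ⟨m.1.2.1, (doubleCoset_mem_objs m.2).2⟩,
        m.1.2.2⟩,
      (mem_doubleCoset_iff_nonempty_hom H K g ha hb _).mp m.2⟩
  invFun p := ⟨⟨p.1.left.1, p.1.right.1, p.1.hom⟩,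
    (mem_doubleCoset_iff_nonempty_hom H K g ha hb p.1).mpr p.2⟩
  left_inv _ := rfl
  right_inv _ := rfl

/-- for subgroupoids `H`, `K` of `G` and a morphism `g : a ⟶ b` with
`a ∈ K₀` and `b ∈ H₀`, the double coset `H g K` is in bijection with the set of objects of
the connected component, in the comma category `Incl_K ↓ Incl_H`, of the object
corresponding to `g`; moreover a morphism `g'` lies in `H g K` iff its corresponding object
is connected to that of `g`. -/
theorem stmt_8 (H K : Subgroupoid G) {a b : G} (g : a ⟶ b)
    (ha : a ∈ K.objs) (hb : b ∈ H.objs) :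
    Nonempty ((doubleCoset H K g) ≃
      {p : Comma K.hom H.hom //
        Nonempty (p ⟶ { left := ⟨a, ha⟩, right := ⟨b, hb⟩, hom := g })}) ∧
    (∀ (a' b' : G) (g' : a' ⟶ b') (ha' : a' ∈ K.objs) (hb' : b' ∈ H.objs),
      (⟨a', b', g'⟩ : Σ s t : G, s ⟶ t) ∈ doubleCoset H K g ↔
        Nonempty (({ left := ⟨a', ha'⟩, right := ⟨b', hb'⟩, hom := g' } :
            Comma K.hom H.hom) ⟶ { left := ⟨a, ha⟩, right := ⟨b, hb⟩, hom := g })) :=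
  ⟨⟨doubleCosetEquivComma H K g ha hb⟩,
    fun _ _ g' ha' hb' =>
      mem_doubleCoset_iff_nonempty_hom H K g ha hb ⟨⟨_, ha'⟩, ⟨_, hb'⟩, g'⟩⟩
end

section
/- Let G be a finite groupoid and H, K wide subgroupoids. There is a ℂ-linear isomorphism between ℂ_{H\G/K} (functions φ : G₁ → ℂ with φ(h⁻¹ g k) = φ(g) for all composable h ∈ H₁, k ∈ K₁) and the vector space of natural transformations Y_H → Y_K, where Y_H(a) is the space of functions on Mor_G(−,a) invariant under right precomposition by morphisms of H (and similarly Y_K), with G acting via g·f = f(g⁻¹∘−). In particular, the dimension of the space of natural transformations Y_H → Y_K equals the number of double cosets |H\G/K|. -/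
open CategoryTheory

variable {G : Type} [Groupoid G]

/-- The space `ℂ_{H\G/K}` of functions on the morphisms of `G` invariant under
`g ↦ h⁻¹ g k` for `h ∈ H₁`, `k ∈ K₁`. -/
noncomputable def dcFun (H K : Subgroupoid G) : Submodule ℂ ((Σ a b : G, a ⟶ b) → ℂ) where
  carrier := {φ | ∀ {a b s t : G} (g : a ⟶ b) (h : s ⟶ b) (k : t ⟶ a),
    h ∈ H.arrows s b → k ∈ K.arrows t a →
    φ ⟨t, s, k ≫ g ≫ Groupoid.inv h⟩ = φ ⟨a, b, g⟩}
  add_mem' := fun hφ hψ => by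
    intro a b s t g h k hh hk
    simp only [Pi.add_apply, hφ g h k hh hk, hψ g h k hh hk]
  zero_mem' := by
    intro a b s t g h k hh hk
    rfl
  smul_mem' := fun c φ hφ => by
    intro a b s t g h k hh hk
    simp only [Pi.smul_apply, hφ g h k hh hk]

/-- The space of functions on `Mor_G(−,a)` invariant under right precomposition with
morphisms of `H`. -/
noncomputable def YHsub (H : Subgroupoid G) (a : G) :
    Submodule ℂ ((Σ y : G, y ⟶ a) → ℂ) where
  carrier := {φ | ∀ (y z : G) (g : z ⟶ a) (h : y ⟶ z), h ∈ H.arrows y z →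
    φ ⟨y, h ≫ g⟩ = φ ⟨z, g⟩}
  add_mem' := fun hφ hψ => by
    intro y z g h hh
    simp only [Pi.add_apply, hφ y z g h hh, hψ y z g h hh]
  zero_mem' := by
    intro y z g h hh
    rfl
  smul_mem' := fun c φ hφ => by
    intro y z g h hh
    simp only [Pi.smul_apply, hφ y z g h hh]

/-- The functor `Y_H : G ⥤ Vect_ℂ`, with `G` acting by `g · f = f(g⁻¹ ∘ −)`. -/
noncomputable def YHfun (H : Subgroupoid G) : G ⥤ ModuleCat ℂ where
  obj a := ModuleCat.of ℂ (YHsub H a)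
  map := fun {a a'} g => ModuleCat.ofHom
    { toFun := fun f => ⟨fun k => f.1 ⟨k.1, k.2 ≫ Groupoid.inv g⟩, by
        intro y z g' h hh
        have := f.2 y z (g' ≫ Groupoid.inv g) h hh
        simpa [Category.assoc] using this⟩
      map_add' := fun f f' => rfl
      map_smul' := fun c f => rfl }
  map_id a := by
    apply ModuleCat.hom_ext
    apply LinearMap.ext
    intro f
    apply Subtype.ext
    funext k
    show f.1 ⟨k.1, k.2 ≫ Groupoid.inv (𝟙 a)⟩ = f.1 k
    simp [Groupoid.inv_eq_inv]
  map_comp := fun {a a' a''} g g' => by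
    apply ModuleCat.hom_ext
    apply LinearMap.ext
    intro f
    apply Subtype.ext
    funext k
    show f.1 ⟨k.1, k.2 ≫ Groupoid.inv (g ≫ g')⟩ =
      f.1 ⟨k.1, (k.2 ≫ Groupoid.inv g') ≫ Groupoid.inv g⟩
    simp [Groupoid.inv_eq_inv]


/-! The map `φ ↦ θ_φ`, `θ_φ(f)(m) = ∑ₓ φ(m x⁻¹) f(x)`, sends `ℂ_{H\G/K}` to natural
transformations `Y_H ⟶ Y_K` (the paper's factor `1/N` plays no role and is dropped). Let `e_b` be
the indicator of the `H`-arrows into `b`. By invariance of `φ`, `θ_φ(e_b)(g)` is `φ(g)` times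
the number of `H`-arrows into `b`, which recovers `φ` from `θ_φ`. Conversely every `f ∈ Y_H(b)`
is a combination of the translates `x · e_y` (`x : y ⟶ b`), so by naturality any `θ` is the
integral operator of the kernel read off from the values `θ(e_b)`. Finally `ℂ_{H\G/K}` is the
space of functions on the set of double cosets, whose dimension is their number. -/

noncomputable def dcFunEquivQuot (H K : Subgroupoid G) :
    dcFun H K ≃ₗ[ℂ] (Quot (fun m m' : Σ a b : G, a ⟶ b => m' ∈ doubleCoset H K m.2.2) → ℂ) where
  toFun φ := Quot.lift φ.1 <| by
    rintro ⟨a, b, g⟩ _ ⟨s, t, h, k, hh, hk, rfl⟩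
    simpa using (φ.2 g (Groupoid.inv h) k (H.inv hh) hk).symm
  invFun ψ := ⟨fun m => ψ (Quot.mk _ m), fun g h k hh hk =>
    (congrArg ψ (Quot.sound (⟨_, _, Groupoid.inv h, k, H.inv hh, hk, rfl⟩ :
      ⟨_, _, k ≫ g ≫ Groupoid.inv h⟩ ∈ doubleCoset H K g))).symm⟩
  map_add' _ _ := funext fun q => Quot.inductionOn q fun _ => rfl
  map_smul' _ _ := funext fun q => Quot.inductionOn q fun _ => rfl
  left_inv _ := rfl
  right_inv ψ := funext fun q => Quot.inductionOn q fun _ => rfl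

noncomputable def YHeval (H : Subgroupoid G) {b : G} (m : Σ y : G, y ⟶ b) :
    (YHfun H).obj b →ₗ[ℂ] ℂ where
  toFun f := f.1 m
  map_add' _ _ := rfl
  map_smul' _ _ := rfl

lemma YHeval_apply (H : Subgroupoid G) {b : G} (m : Σ y : G, y ⟶ b) (f : (YHfun H).obj b) :
    YHeval H m f = f.1 m :=
  rfl

lemma YHfun_obj_ext (H : Subgroupoid G) {b : G} {f f' : (YHfun H).obj b}
    (h : ∀ m, YHeval H m f = YHeval H m f') : f = f' :=
  Subtype.ext (funext h)

lemma YHeval_map (H : Subgroupoid G) {a a' : G} (g : a ⟶ a') (f : (YHfun H).obj a)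
    (k : Σ y : G, y ⟶ a') :
    YHeval H k ((YHfun H).map g f) = YHeval H ⟨k.1, k.2 ≫ Groupoid.inv g⟩ f :=
  rfl

open scoped Classical in
noncomputable def indicatorYH (H : Subgroupoid G) (b : G) : (YHfun H).obj b :=
  ⟨fun x => if x.2 ∈ H.arrows x.1 b then 1 else 0, fun _ _ _ _ hh =>
    if_congr (H.mul_mem_cancel_left hh) rfl rfl⟩

open scoped Classical in
lemma YHeval_indicatorYH (H : Subgroupoid G) (b : G) (x : Σ y : G, y ⟶ b) :
    YHeval H x (indicatorYH H b) = if x.2 ∈ H.arrows x.1 b then 1 else 0 :=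
  rfl

lemma YHeval_app_map {H K : Subgroupoid G} (θ : YHfun H ⟶ YHfun K) {a a' : G}
    (g : a ⟶ a') (f : (YHfun H).obj a) (k : Σ y : G, y ⟶ a') :
    YHeval K k (θ.app a' ((YHfun H).map g f)) =
      YHeval K ⟨k.1, k.2 ≫ Groupoid.inv g⟩ (θ.app a f) :=
  congrArg (YHeval K k) (ConcreteCategory.congr_hom (θ.naturality g) f)

open scoped Classical in
lemma map_inv_indicatorYH {H : Subgroupoid G} {s b : G} {h : s ⟶ b} (hh : h ∈ H.arrows s b) :
    (YHfun H).map (Groupoid.inv h) (indicatorYH H b) = indicatorYH H s :=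
  YHfun_obj_ext H fun x => by
    rw [YHeval_map, YHeval_indicatorYH, YHeval_indicatorYH]
    simpa only [Groupoid.inv_eq_inv, IsIso.inv_inv] using
      if_congr (H.mul_mem_cancel_right hh) rfl rfl

section Finite

open scoped Classical

variable [Fintype G] [∀ a b : G, Fintype (a ⟶ b)]

lemma sum_sigma_comp_right {M : Type*} [AddCommMonoid M] {t b : G} (m : t ⟶ b)
    (F : (Σ y : G, y ⟶ b) → M) : ∑ x, F x = ∑ x : Σ y : G, y ⟶ t, F ⟨x.1, x.2 ≫ m⟩ :=
  (Fintype.sum_equiv (Equiv.sigmaCongrRight fun y => (Iso.refl y).homCongr (asIso m)) _ _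
    fun x => by simp).symm

variable (H : Subgroupoid G) {K : Subgroupoid G}

noncomputable def numArrowsTo (b : G) : ℂ :=
  ∑ x : Σ y : G, y ⟶ b, if x.2 ∈ H.arrows x.1 b then 1 else 0

lemma numArrowsTo_ne_zero (hH : H.IsWide) (b : G) : numArrowsTo H b ≠ 0 := by
  rw [numArrowsTo, Finset.sum_boole]
  exact Nat.cast_ne_zero.2 <| Finset.card_ne_zero_of_mem <|
    Finset.mem_filter.2 ⟨Finset.mem_univ ⟨b, 𝟙 b⟩, hH.id_mem b⟩

lemma numArrowsTo_eq_of_mem {s b : G} {h : s ⟶ b} (hh : h ∈ H.arrows s b) :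
    numArrowsTo H s = numArrowsTo H b := by
  rw [numArrowsTo, numArrowsTo, sum_sigma_comp_right h]
  exact Finset.sum_congr rfl fun x _ => if_congr (H.mul_mem_cancel_right hh).symm rfl rfl

lemma sum_ite_comp_inv_mem {t b : G} (m : t ⟶ b) :
    ∑ x : Σ y : G, y ⟶ b, (if m ≫ Groupoid.inv x.2 ∈ H.arrows t x.1 then 1 else 0 : ℂ) =
      numArrowsTo H t := by
  rw [sum_sigma_comp_right m, numArrowsTo]
  refine Finset.sum_congr rfl fun x _ => if_congr ?_ rfl rfl
  simpa using H.inv_mem_iff x.2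

lemma eq_sum_smul_map_indicatorYH (hH : H.IsWide) {b : G} (f : (YHfun H).obj b) :
    f = ∑ x : Σ y : G, y ⟶ b,
      (YHeval H x f / numArrowsTo H x.1) • (YHfun H).map x.2 (indicatorYH H x.1) := by
  refine YHfun_obj_ext H fun ⟨t, m⟩ => ?_
  have hterm : ∀ x : Σ y : G, y ⟶ b,
      YHeval H x f / numArrowsTo H x.1 *
          (if m ≫ Groupoid.inv x.2 ∈ H.arrows t x.1 then 1 else 0) =
        YHeval H ⟨t, m⟩ f / numArrowsTo H t *
          (if m ≫ Groupoid.inv x.2 ∈ H.arrows t x.1 then 1 else 0) := by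
    intro x
    split_ifs with hx
    · have hf : YHeval H ⟨t, m⟩ f = YHeval H x f := by
        simpa [YHeval_apply] using f.2 t x.1 x.2 _ hx
      rw [hf, numArrowsTo_eq_of_mem H hx]
    · simp
  simp only [map_sum, map_smul, YHeval_map, YHeval_indicatorYH, smul_eq_mul]
  rw [Finset.sum_congr rfl fun x _ => hterm x, ← Finset.mul_sum, sum_ite_comp_inv_mem,
    div_mul_cancel₀ _ (numArrowsTo_ne_zero H hH t)]

variable {H}

noncomputable def convolutionMatrix (φ : (Σ a b : G, a ⟶ b) → ℂ) (b : G) :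
    Matrix (Σ y : G, y ⟶ b) (Σ y : G, y ⟶ b) ℂ :=
  Matrix.of fun m x => φ ⟨m.1, x.1, m.2 ≫ Groupoid.inv x.2⟩

lemma convolutionMatrix_mulVec_mem (hH : H.IsWide) (φ : dcFun H K) {b : G}
    (f : (Σ y : G, y ⟶ b) → ℂ) : (convolutionMatrix φ.1 b).mulVec f ∈ YHsub K b := by
  intro y z g k hk
  refine Finset.sum_congr rfl fun x _ => congrArg (· * f x) ?_
  simpa [convolutionMatrix] using φ.2 (g ≫ Groupoid.inv x.2) (𝟙 x.1) k (hH.id_mem x.1) hk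

noncomputable def integralOperator (hH : H.IsWide) (φ : dcFun H K) : YHfun H ⟶ YHfun K where
  app b := ModuleCat.ofHom <|
    (convolutionMatrix φ.1 b).mulVecLin.restrict fun f _ => convolutionMatrix_mulVec_mem hH φ f
  naturality b b' g := by
    ext f
    refine YHfun_obj_ext K fun m => ?_
    change ∑ x, φ.1 ⟨m.1, x.1, m.2 ≫ Groupoid.inv x.2⟩ * YHeval H x ((YHfun H).map g f) =
      ∑ x, φ.1 ⟨m.1, x.1, (m.2 ≫ Groupoid.inv g) ≫ Groupoid.inv x.2⟩ * YHeval H x f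
    rw [sum_sigma_comp_right g]
    simp [YHeval_map]

lemma YHeval_integralOperator_app (hH : H.IsWide) (φ : dcFun H K) {b : G}
    (f : (YHfun H).obj b) (m : Σ y : G, y ⟶ b) :
    YHeval K m ((integralOperator hH φ).app b f) =
      ∑ x, φ.1 ⟨m.1, x.1, m.2 ≫ Groupoid.inv x.2⟩ * YHeval H x f :=
  rfl

variable (H) in
noncomputable def kernelOfNatTrans (θ : YHfun H ⟶ YHfun K) : dcFun H K :=
  ⟨fun m => YHeval K ⟨m.1, m.2.2⟩ (θ.app m.2.1 (indicatorYH H m.2.1)) / numArrowsTo H m.2.1,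
    by
    intro a b s t g h k hh hk
    dsimp only
    rw [← map_inv_indicatorYH hh, YHeval_app_map, numArrowsTo_eq_of_mem H hh]
    congr 1
    simpa [YHeval_apply] using (θ.app b (indicatorYH H b)).2 t a g k hk⟩

lemma integralOperator_kernelOfNatTrans (hH : H.IsWide) (θ : YHfun H ⟶ YHfun K) :
    integralOperator hH (kernelOfNatTrans H θ) = θ := by
  ext b : 2
  ext f
  refine YHfun_obj_ext K fun m => ?_
  conv_rhs => rw [eq_sum_smul_map_indicatorYH H hH f, map_sum, map_sum]
  rw [YHeval_integralOperator_app]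
  refine Finset.sum_congr rfl fun x _ => ?_
  rw [map_smul, map_smul, YHeval_app_map, smul_eq_mul, kernelOfNatTrans]
  ring

lemma kernelOfNatTrans_integralOperator (hH : H.IsWide) (hK : K.IsWide) (φ : dcFun H K) :
    kernelOfNatTrans H (integralOperator hH φ) = φ := by
  refine Subtype.ext (funext fun ⟨a, b, g⟩ => ?_)
  have hterm : ∀ x : Σ y : G, y ⟶ b,
      φ.1 ⟨a, x.1, g ≫ Groupoid.inv x.2⟩ * (if x.2 ∈ H.arrows x.1 b then 1 else 0) =
        φ.1 ⟨a, b, g⟩ * (if x.2 ∈ H.arrows x.1 b then 1 else 0) := by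
    intro x
    split_ifs with hx
    · simpa using φ.2 g x.2 (𝟙 a) hx (hK.id_mem a)
    · simp
  change (∑ x, φ.1 ⟨a, x.1, g ≫ Groupoid.inv x.2⟩ * YHeval H x (indicatorYH H b)) /
    numArrowsTo H b = φ.1 ⟨a, b, g⟩
  simp only [YHeval_indicatorYH]
  rw [Finset.sum_congr rfl fun x _ => hterm x, ← Finset.mul_sum, ← numArrowsTo,
    mul_div_cancel_right₀ _ (numArrowsTo_ne_zero H hH b)]

noncomputable def natTransEquivDcFun (hH : H.IsWide) (hK : K.IsWide) :
    (YHfun H ⟶ YHfun K) ≃ₗ[ℂ] dcFun H K where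
  toFun := kernelOfNatTrans H
  map_add' θ θ' := Subtype.ext <| funext fun m => by simp [kernelOfNatTrans, add_div]
  map_smul' c θ := Subtype.ext <| funext fun m => by simp [kernelOfNatTrans, mul_div_assoc]
  invFun := integralOperator hH
  left_inv := integralOperator_kernelOfNatTrans hH
  right_inv := kernelOfNatTrans_integralOperator hH hK

end Finite

/-- for wide subgroupoids `H`, `K` of a finite groupoid `G`, the space
`ℂ_{H\G/K}` is `ℂ`-linearly isomorphic to the space of natural transformations
`Y_H ⟶ Y_K`; in particular the dimension of the latter equals the number of double
cosets `|H\G/K|`. -/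
theorem stmt_17 [Fintype G] [∀ a b : G, Fintype (a ⟶ b)] (H K : Subgroupoid G)
    (hH : H.IsWide) (hK : K.IsWide) :
    Nonempty ((dcFun H K) ≃ₗ[ℂ] (YHfun H ⟶ YHfun K)) ∧
    Module.finrank ℂ (YHfun H ⟶ YHfun K) =
      Nat.card (Quot (fun m m' : Σ a b : G, a ⟶ b => m' ∈ doubleCoset H K m.2.2)) := by
  let e := natTransEquivDcFun hH hK
  refine ⟨⟨e.symm⟩, ?_⟩
  have := Fintype.ofFinite (Quot fun m m' : Σ a b : G, a ⟶ b => m' ∈ doubleCoset H K m.2.2)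
  rw [e.finrank_eq, (dcFunEquivQuot H K).finrank_eq, Module.finrank_pi, Fintype.card_eq_nat_card]
end
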